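/- arXiv:2306.01147 — 5 statements merged into one kernel-verified Lean document; each statement's English description precedes it below -/
import Mathlib

section
/- Consider an MM network with output y and the SMM network with the same weights and biases, parameter β > 0, and output y_SMM. Let H = max_{1≤k≤K} h_k. Then for every x ∈ ℝ^d, |y_SMM(x) − y(x)| ≤ (1/β)·ln(max(K, H)). -/
/-!
For `β > 0`, `LSE_β` of `n` numbers lies between their maximum and the maximum plus `log n / β`,
and `LSE_{-β}` between their minimum minus `log n / β` and the minimum. In the SMM network the
smoothing of each inner max can only raise the output and the smoothing of the outer min can only
lower it, so the two errors never add up: each side of the difference is bounded by a single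
`log K / β` or `log h_k / β`, hence by `log (max K H) / β`.
-/

/-- The scaled LogSumExp function: `LSE_β(x₁,…,xₙ) = (1/β)·log(∑ i, exp(β·xᵢ))`. -/
noncomputable def lse (β : ℝ) {n : ℕ} (x : Fin n → ℝ) : ℝ :=
  (1 / β) * Real.log (∑ i, Real.exp (β * x i))

/-- Output of a min-max (MM) network: `y(x) = min_k max_j (w^(k,j)·x − b^(k,j))`. -/
noncomputable def mmOut {d K : ℕ} {h : Fin K → ℕ} (hK : 0 < K) (hh : ∀ k, 0 < h k)
    (w : (k : Fin K) → Fin (h k) → Fin d → ℝ)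
    (b : (k : Fin K) → Fin (h k) → ℝ) (x : Fin d → ℝ) : ℝ :=
  haveI : Nonempty (Fin K) := Fin.pos_iff_nonempty.mp hK
  Finset.univ.inf' Finset.univ_nonempty fun k =>
    haveI : Nonempty (Fin (h k)) := Fin.pos_iff_nonempty.mp (hh k)
    Finset.univ.sup' Finset.univ_nonempty fun j => (∑ i, w k j i * x i) - b k j

/-- Output of a smooth min-max (SMM) network. -/
noncomputable def smmOut {d K : ℕ} {h : Fin K → ℕ} (β : ℝ)
    (w : (k : Fin K) → Fin (h k) → Fin d → ℝ)
    (b : (k : Fin K) → Fin (h k) → ℝ) (x : Fin d → ℝ) : ℝ :=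
  lse (-β) fun k => lse β fun j => (∑ i, w k j i * x i) - b k j

open Finset Real

section LogSumExp

variable {n : ℕ} {β : ℝ} (x : Fin n → ℝ)

lemma lse_neg : lse (-β) x = -lse β (-x) := by
  simp only [lse, Pi.neg_apply, mul_neg, one_div, inv_neg, neg_mul]

lemma le_lse (hβ : 0 < β) (j : Fin n) : x j ≤ lse β x := by
  have hterm : exp (β * x j) ≤ ∑ i, exp (β * x i) :=
    single_le_sum (f := fun i => exp (β * x i)) (fun i _ => (exp_pos _).le) (mem_univ j)
  calc x j = 1 / β * log (exp (β * x j)) := by rw [log_exp]; field_simp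
    _ ≤ lse β x := by unfold lse; gcongr

lemma lse_neg_le (hβ : 0 < β) (j : Fin n) : lse (-β) x ≤ x j := by
  rw [lse_neg]
  linarith [le_lse (-x) hβ j, show (-x) j = -x j from rfl]

variable [Nonempty (Fin n)]

lemma lse_le_add_log_div (hβ : 0 < β) {c : ℝ} (hc : ∀ i, x i ≤ c) :
    lse β x ≤ c + log n / β := by
  have hsum : ∑ i, exp (β * x i) ≤ n * exp (β * c) :=
    calc ∑ i, exp (β * x i) ≤ ∑ _i : Fin n, exp (β * c) :=
          sum_le_sum fun i _ => by gcongr; exact hc i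
      _ = n * exp (β * c) := by simp
  have hpos : 0 < ∑ i, exp (β * x i) := sum_pos (fun i _ => exp_pos _) univ_nonempty
  have hn : (n : ℝ) ≠ 0 := by simp [Nat.pos_iff_ne_zero.mp Fin.pos']
  calc lse β x ≤ 1 / β * log (n * exp (β * c)) := by unfold lse; gcongr
    _ = c + log n / β := by rw [log_mul hn (exp_ne_zero _), log_exp]; field_simp; ring

lemma sub_log_div_le_lse_neg (hβ : 0 < β) {c : ℝ} (hc : ∀ i, c ≤ x i) :
    c - log n / β ≤ lse (-β) x := by
  have := lse_le_add_log_div (-x) hβ (c := -c) fun i => neg_le_neg (hc i)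
  rw [lse_neg]
  linarith

end LogSumExp

theorem abs_smmOut_sub_mmOut_le_general {d K : ℕ} {h : Fin K → ℕ} (hK : 0 < K) (hh : ∀ k, 0 < h k)
    (β : ℝ) (hβ : 0 < β)
    (w : (k : Fin K) → Fin (h k) → Fin d → ℝ)
    (b : (k : Fin K) → Fin (h k) → ℝ) (x : Fin d → ℝ) :
    |smmOut β w b x - mmOut hK hh w b x| ≤
      (1 / β) * Real.log
        ((max K (Finset.univ.sup'
          (Finset.univ_nonempty_iff.mpr (Fin.pos_iff_nonempty.mp hK)) h) : ℕ)) := by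
  have : Nonempty (Fin K) := Fin.pos_iff_nonempty.mp hK
  have (k : Fin K) : Nonempty (Fin (h k)) := Fin.pos_iff_nonempty.mp (hh k)
  set N : ℕ := max K (univ.sup' univ_nonempty h)
  have log_div_le {n : ℕ} (hn₀ : 0 < n) (hn : n ≤ N) : log n / β ≤ log N / β := by
    gcongr
  set a : (k : Fin K) → Fin (h k) → ℝ := fun k j => (∑ i, w k j i * x i) - b k j
  set m : Fin K → ℝ := fun k => univ.sup' univ_nonempty (a k)
  set g : Fin K → ℝ := fun k => lse β (a k)
  have hmg (k : Fin K) : m k ≤ g k := sup'_le _ _ fun j _ => le_lse (a k) hβ j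
  have hgm (k : Fin K) : g k ≤ m k + log N / β :=
    (lse_le_add_log_div (a k) hβ fun j => le_sup' (a k) (mem_univ j)).trans <|
      add_le_add_right (log_div_le (hh k) ((le_sup' h (mem_univ k)).trans (le_max_right _ _))) _
  have hmm : mmOut hK hh w b x = univ.inf' univ_nonempty m := rfl
  have hsmm : smmOut β w b x = lse (-β) g := rfl
  obtain ⟨k₀, -, hk₀⟩ := exists_mem_eq_inf' univ_nonempty m
  rw [abs_le, hmm, hsmm, one_div_mul_eq_div]
  constructor
  · have := sub_log_div_le_lse_neg g hβ (c := univ.inf' univ_nonempty m) fun k =>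
      (inf'_le m (mem_univ k)).trans (hmg k)
    linarith [log_div_le hK (le_max_left _ (univ.sup' univ_nonempty h))]
  · linarith [lse_neg_le g hβ k₀, hgm k₀]

/-- With `H = max_k h_k`, the SMM and MM outputs satisfy
`|y_SMM(x) − y(x)| ≤ (1/β)·ln (max K H)` for every `x`. -/
theorem abs_smmOut_sub_mmOut_le {d K : ℕ} {h : Fin K → ℕ} (hK : 0 < K) (hh : ∀ k, 0 < h k)
    (β : ℝ) (hβ : 0 < β)
    (w : (k : Fin K) → Fin (h k) → Fin d → ℝ) (hw : ∀ k j i, 0 ≤ w k j i)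
    (b : (k : Fin K) → Fin (h k) → ℝ) (x : Fin d → ℝ) :
    |smmOut β w b x - mmOut hK hh w b x| ≤
      (1 / β) * Real.log
        ((max K (Finset.univ.sup'
          (Finset.univ_nonempty_iff.mpr (Fin.pos_iff_nonempty.mp hK)) h) : ℕ)) :=
  abs_smmOut_sub_mmOut_le_general hK hh β hβ w b x
end

section
/- (Theorem 1, Sill) Let f: [0,1]^d → ℝ be continuous, coordinatewise non-decreasing, and Lipschitz continuous (bounded partial derivatives). Then for every ε > 0 there exist K ≥ 1, group sizes h₁,…,h_K ≥ 1, nonnegative weight vectors w^(k,j) ∈ ℝ^d and biases b^(k,j) ∈ ℝ such that the MM network output y satisfies |f(x) − y(x)| < ε for all x ∈ [0,1]^d. -/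
open Finset

theorem Finset.sup'_univ_comp_equiv {α β γ : Type*} [Fintype α] [Fintype β] [Nonempty α]
    [Nonempty β] [SemilatticeSup γ] (e : α ≃ β) (g : β → γ) :
    univ.sup' univ_nonempty (g ∘ e) = univ.sup' univ_nonempty g :=
  (sup'_comp_eq_map g (f := e.toEmbedding) univ_nonempty).trans
    (sup'_congr _ (map_univ_equiv e) fun _ _ => rfl)

theorem Finset.inf'_univ_comp_equiv {α β γ : Type*} [Fintype α] [Fintype β] [Nonempty α]
    [Nonempty β] [SemilatticeInf γ] (e : α ≃ β) (g : β → γ) :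
    univ.inf' univ_nonempty (g ∘ e) = univ.inf' univ_nonempty g :=
  Finset.sup'_univ_comp_equiv (γ := γᵒᵈ) e g

theorem exists_mmOut_eq_inf'_sup' {d : ℕ} {ι : Type*} [Fintype ι] [Nonempty ι]
    {κ : ι → Type*} [∀ k, Fintype (κ k)] [∀ k, Nonempty (κ k)]
    (w : (k : ι) → κ k → Fin d → ℝ) (b : (k : ι) → κ k → ℝ) (hw : ∀ k j i, 0 ≤ w k j i) :
    ∃ (K : ℕ) (hK : 0 < K) (h : Fin K → ℕ) (hh : ∀ k, 0 < h k)
      (w' : (k : Fin K) → Fin (h k) → Fin d → ℝ) (b' : (k : Fin K) → Fin (h k) → ℝ),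
      (∀ k j i, 0 ≤ w' k j i) ∧ ∀ x, mmOut hK hh w' b' x =
        univ.inf' univ_nonempty fun k => univ.sup' univ_nonempty fun j => w k j ⬝ᵥ x - b k j := by
  let eι := (Fintype.equivFin ι).symm
  let eκ := fun k => (Fintype.equivFin (κ (eι k))).symm
  refine ⟨_, Fintype.card_pos, fun k => Fintype.card (κ (eι k)), fun _ => Fintype.card_pos,
    fun k j => w (eι k) (eκ k j), fun k j => b (eι k) (eκ k j), fun _ _ _ => hw _ _ _,
    fun x => ?_⟩
  rw [← inf'_univ_comp_equiv eι]
  refine inf'_congr _ rfl fun k _ => ?_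
  exact sup'_univ_comp_equiv (eκ k) fun j => w (eι k) j ⬝ᵥ x - b (eι k) j

theorem MonotoneOn.le_add_mul_of_le_add {ι : Type*} [Fintype ι] {f : (ι → ℝ) → ℝ} {C : NNReal}
    {a b : ι → ℝ} (hmono : MonotoneOn f (Set.Icc a b)) (hlip : LipschitzOnWith C f (Set.Icc a b))
    {x y : ι → ℝ} (hx : x ∈ Set.Icc a b) (hy : y ∈ Set.Icc a b) {t : ℝ} (ht : 0 ≤ t)
    (hyx : ∀ i, y i ≤ x i + t) : f y ≤ f x + C * t := by
  have hq : y ⊓ x ∈ Set.Icc a b := ⟨le_inf hy.1 hx.1, inf_le_left.trans hy.2⟩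
  have hdist : dist y (y ⊓ x) ≤ t := (dist_pi_le_iff ht).2 fun i => by
    rw [Real.dist_eq, Pi.inf_apply, abs_le]
    constructor
    · linarith [min_le_left (y i) (x i)]
    · linarith [le_min (show y i - t ≤ y i by linarith) (show y i - t ≤ x i by linarith [hyx i])]
  calc f y ≤ f (y ⊓ x) + C * dist y (y ⊓ x) :=
        sub_le_iff_le_add'.1 <| (Real.sub_le_dist _ _).trans (hlip.dist_le_mul y hy _ hq)
    _ ≤ f x + C * t := add_le_add (hmono hq hx inf_le_right) (by gcongr)

noncomputable def gridPoint {ι : Type*} (n : ℕ) (p : ι → Fin (n + 1)) : ι → ℝ :=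
  fun i => (p i : ℕ) / n

theorem gridPoint_mem_Icc {ι : Type*} (n : ℕ) (p : ι → Fin (n + 1)) :
    gridPoint n p ∈ Set.Icc 0 1 :=
  ⟨fun i => by unfold gridPoint; positivity,
    fun i => div_le_one_of_le₀ (Nat.cast_le.2 (Nat.lt_succ_iff.1 (p i).isLt)) n.cast_nonneg⟩

theorem exists_gridPoint_le_add {ι : Type*} {n : ℕ} (hn : 0 < n) {x : ι → ℝ}
    (hx : x ∈ Set.Icc 0 1) :
    ∃ p : ι → Fin (n + 1), x ≤ gridPoint n p ∧ ∀ i, gridPoint n p i ≤ x i + 1 / n := by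
  have hnR : (0 : ℝ) < n := by exact_mod_cast hn
  have hceil : ∀ i, ⌈x i * n⌉₊ < n + 1 := fun i => Nat.lt_succ_of_le <| Nat.ceil_le.2 <| by
    simpa using mul_le_mul_of_nonneg_right (hx.2 i) hnR.le
  refine ⟨fun i => ⟨_, hceil i⟩, fun i => (le_div_iff₀ hnR).2 (Nat.le_ceil _), fun i => ?_⟩
  rw [gridPoint, div_le_iff₀ hnR, add_mul, one_div_mul_cancel hnR.ne']
  exact (Nat.ceil_lt_add_one (mul_nonneg (hx.1 i) hnR.le)).le

section Cone
variable {ι : Type*} [DecidableEq ι]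

def coneWeight (C : ℝ) (j : Option ι) : ι → ℝ := j.elim 0 fun i => Pi.single i C

def coneBias (f : (ι → ℝ) → ℝ) (C : ℝ) (p : ι → ℝ) (j : Option ι) : ℝ :=
  j.elim (-f p) fun i => C * p i - f p

theorem coneWeight_nonneg {C : ℝ} (hC : 0 ≤ C) (j : Option ι) (i : ι) :
    0 ≤ coneWeight C j i := by
  cases j with
  | none => exact le_rfl
  | some l => exact (Pi.single_nonneg (α := fun _ => ℝ)).2 hC i

variable [Fintype ι]

noncomputable def coneGroup (f : (ι → ℝ) → ℝ) (C : ℝ) (p x : ι → ℝ) : ℝ :=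
  univ.sup' univ_nonempty fun j => coneWeight C j ⬝ᵥ x - coneBias f C p j

theorem coneWeight_dotProduct_sub_coneBias (f : (ι → ℝ) → ℝ) (C : ℝ) (p x : ι → ℝ)
    (j : Option ι) :
    coneWeight C j ⬝ᵥ x - coneBias f C p j = f p + C * j.elim 0 fun i => x i - p i := by
  cases j with
  | none => simp [coneWeight, coneBias]
  | some i => simp only [coneWeight, coneBias, Option.elim_some, single_dotProduct]; ring

theorem coneGroup_le_of_le (f : (ι → ℝ) → ℝ) {C : ℝ} (hC : 0 ≤ C) {p x : ι → ℝ} (hxp : x ≤ p) :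
    coneGroup f C p x ≤ f p := by
  refine sup'_le _ _ fun j _ => ?_
  rw [coneWeight_dotProduct_sub_coneBias, add_le_iff_nonpos_right]
  cases j with
  | none => simp
  | some i => exact mul_nonpos_of_nonneg_of_nonpos hC (sub_nonpos.2 (hxp i))

theorem MonotoneOn.le_coneGroup {f : (ι → ℝ) → ℝ} {C : NNReal} {a b : ι → ℝ}
    (hmono : MonotoneOn f (Set.Icc a b)) (hlip : LipschitzOnWith C f (Set.Icc a b))
    {p x : ι → ℝ} (hp : p ∈ Set.Icc a b) (hx : x ∈ Set.Icc a b) : f x ≤ coneGroup f C p x := by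
  obtain ⟨j₀, -, hj₀⟩ := exists_max_image univ (fun j : Option ι => j.elim 0 fun i => x i - p i)
    univ_nonempty
  have ht := hj₀ none (mem_univ _)
  have hxp : ∀ i, x i ≤ p i + _ := fun i => sub_le_iff_le_add'.1 (hj₀ (some i) (mem_univ _))
  calc f x ≤ f p + C * _ := hmono.le_add_mul_of_le_add hlip hp hx ht hxp
    _ = _ := (coneWeight_dotProduct_sub_coneBias f C p x j₀).symm
    _ ≤ coneGroup f C p x :=
      le_sup' (fun j => coneWeight C j ⬝ᵥ x - coneBias f C p j) (mem_univ j₀)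

end Cone

theorem mm_universal_approximation_general {d : ℕ} (f : (Fin d → ℝ) → ℝ)
    (hmono : MonotoneOn f (Set.Icc 0 1))
    (hlip : ∃ C : NNReal, LipschitzOnWith C f (Set.Icc 0 1))
    (ε : ℝ) (hε : 0 < ε) :
    ∃ (K : ℕ) (hK : 0 < K) (h : Fin K → ℕ) (hh : ∀ k, 0 < h k)
      (w : (k : Fin K) → Fin (h k) → Fin d → ℝ)
      (b : (k : Fin K) → Fin (h k) → ℝ),
      (∀ k j i, 0 ≤ w k j i) ∧
      ∀ x ∈ Set.Icc (0 : Fin d → ℝ) 1, |f x - mmOut hK hh w b x| < ε := by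
  obtain ⟨C, hC⟩ := hlip
  obtain ⟨n, hn⟩ := exists_nat_gt (C / ε)
  have hnR : (0 : ℝ) < n := (div_nonneg C.2 hε.le).trans_lt hn
  obtain ⟨K, hK, h, hh, w, b, hw, hy⟩ := exists_mmOut_eq_inf'_sup'
    (ι := Fin d → Fin (n + 1)) (κ := fun _ => Option (Fin d)) (fun _ => coneWeight C)
    (fun p => coneBias f C (gridPoint n p)) fun _ => coneWeight_nonneg C.2
  refine ⟨K, hK, h, hh, w, b, hw, fun x hx => ?_⟩
  obtain ⟨p, hxp, hpx⟩ := exists_gridPoint_le_add (Nat.cast_pos.1 hnR) hx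
  have lower : f x ≤ mmOut hK hh w b x :=
    hy x ▸ le_inf' _ _ fun q _ => hmono.le_coneGroup hC (gridPoint_mem_Icc n q) hx
  have upper : mmOut hK hh w b x ≤ f x + C / n := calc
    mmOut hK hh w b x ≤ coneGroup f C (gridPoint n p) x := hy x ▸ inf'_le _ (mem_univ p)
    _ ≤ f (gridPoint n p) := coneGroup_le_of_le f C.2 hxp
    _ ≤ f x + C * (1 / n) :=
      hmono.le_add_mul_of_le_add hC hx (gridPoint_mem_Icc n p) (by positivity) hpx
    _ = f x + C / n := by rw [mul_one_div]
  have hCn : (C : ℝ) / n < ε := (div_lt_iff₀ hnR).2 (by rwa [div_lt_iff₀ hε, mul_comm] at hn)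
  rw [abs_sub_lt_iff]
  constructor <;> linarith

/-- (Sill) Every continuous, coordinatewise non-decreasing, Lipschitz function
`f : [0,1]^d → ℝ` can be approximated uniformly to within any `ε > 0` by a
min-max network with nonnegative weights. -/
theorem mm_universal_approximation {d : ℕ} (f : (Fin d → ℝ) → ℝ)
    (hcont : ContinuousOn f (Set.Icc 0 1))
    (hmono : MonotoneOn f (Set.Icc 0 1))
    (hlip : ∃ C : NNReal, LipschitzOnWith C f (Set.Icc 0 1))
    (ε : ℝ) (hε : 0 < ε) :
    ∃ (K : ℕ) (hK : 0 < K) (h : Fin K → ℕ) (hh : ∀ k, 0 < h k)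
      (w : (k : Fin K) → Fin (h k) → Fin d → ℝ)
      (b : (k : Fin K) → Fin (h k) → ℝ),
      (∀ k j i, 0 ≤ w k j i) ∧
      ∀ x ∈ Set.Icc (0 : Fin d → ℝ) 1, |f x - mmOut hK hh w b x| < ε :=
  mm_universal_approximation_general f hmono hlip ε hε
end

section
/- (Partial monotone SMM) Split the input as x = (x_c, x_u) ∈ ℝ^p × ℝ^q. For each 1 ≤ k ≤ K, 1 ≤ j ≤ h_k, let Ψ^(k,j): ℝ^q → [0,1]^p and Φ^(k,j): ℝ^q → ℝ^{l(k,j)} be arbitrary functions, let w^(k,j) ∈ ℝ^{p+q} have nonnegative entries in the p constrained coordinates (the entries for x_u unrestricted), let w_u^(k,j) ∈ ℝ^{l(k,j)} and b^(k,j) ∈ ℝ, and define a^(k,j)(x) = w^(k,j)·x + Ψ^(k,j)(x_u)·x_c + w_u^(k,j)·Φ^(k,j)(x_u) − b^(k,j). Then for β > 0, the output y_SMM(x) = LSE_{−β}(g_SMM^(1)(x),…,g_SMM^(K)(x)) with g_SMM^(k)(x) = LSE_β(a^(k,1)(x),…,a^(k,h_k)(x)) is, for each fixed x_u, coordinatewise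 non-decreasing in x_c: x_c ≤ x_c' componentwise implies y_SMM(x_c, x_u) ≤ y_SMM(x_c', x_u). -/
lemma lse_mono {n : ℕ} {β : ℝ} (hβ : β ≠ 0) {x y : Fin n → ℝ}
    (hxy : ∀ i, x i ≤ y i) : lse β x ≤ lse β y := by
  rcases Nat.eq_zero_or_pos n with hn | hn
  · subst hn; simp [lse]
  have hne : (Finset.univ : Finset (Fin n)).Nonempty := Finset.univ_nonempty_iff.2 (Fin.pos_iff_nonempty.1 hn)
  have hpos : ∀ z : Fin n → ℝ, 0 < ∑ i, Real.exp (β * z i) := fun z =>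
    Finset.sum_pos (fun i _ => Real.exp_pos _) hne
  rcases lt_or_gt_of_ne hβ with hneg | hposβ
  · have hsum : ∑ i, Real.exp (β * y i) ≤ ∑ i, Real.exp (β * x i) := by
      apply Finset.sum_le_sum; intro i _
      exact Real.exp_le_exp.2 (mul_le_mul_of_nonpos_left (hxy i) hneg.le)
    have hlog := Real.log_le_log (hpos y) hsum
    unfold lse
    have h1β : (1/β) < 0 := by simpa using one_div_neg.2 hneg
    nlinarith [hlog]
  · have hsum : ∑ i, Real.exp (β * x i) ≤ ∑ i, Real.exp (β * y i) := by
      apply Finset.sum_le_sum; intro i _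
      exact Real.exp_le_exp.2 (mul_le_mul_of_nonneg_left (hxy i) hposβ.le)
    have hlog := Real.log_le_log (hpos x) hsum
    unfold lse
    have h1β : 0 < (1/β) := by positivity
    nlinarith [hlog]

/-- (Partial monotone SMM) With input `x = (x_c, x_u) ∈ ℝ^p × ℝ^q`, activations
`a^(k,j)(x) = w^(k,j)·x + Ψ^(k,j)(x_u)·x_c + w_u^(k,j)·Φ^(k,j)(x_u) − b^(k,j)`,
where the entries of `w^(k,j)` on the `p` constrained coordinates are nonnegative and
`Ψ^(k,j)` takes values in `[0,1]^p`, the SMM output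
`y_SMM = LSE_{−β}(LSE_β(a^(k,1)),…)` is, for each fixed `x_u`, coordinatewise
non-decreasing in `x_c`. -/
theorem smm_partial_monotone {p q K : ℕ} {h : Fin K → ℕ}
    {l : (k : Fin K) → Fin (h k) → ℕ}
    (β : ℝ) (hβ : 0 < β)
    (wc : (k : Fin K) → (j : Fin (h k)) → Fin p → ℝ)
    (hwc : ∀ k j i, 0 ≤ wc k j i)
    (wfree : (k : Fin K) → (j : Fin (h k)) → Fin q → ℝ)
    (Ψ : (k : Fin K) → (j : Fin (h k)) → (Fin q → ℝ) → Fin p → ℝ)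
    (hΨ : ∀ k j u i, Ψ k j u i ∈ Set.Icc (0 : ℝ) 1)
    (Φ : (k : Fin K) → (j : Fin (h k)) → (Fin q → ℝ) → Fin (l k j) → ℝ)
    (wu : (k : Fin K) → (j : Fin (h k)) → Fin (l k j) → ℝ)
    (b : (k : Fin K) → (j : Fin (h k)) → ℝ)
    (xu : Fin q → ℝ) (xc xc' : Fin p → ℝ) (hx : ∀ i, xc i ≤ xc' i) :
    lse (-β) (fun k => lse β (fun j =>
        (∑ i, wc k j i * xc i) + (∑ i, wfree k j i * xu i)
          + (∑ i, Ψ k j xu i * xc i) + (∑ m, wu k j m * Φ k j xu m) - b k j))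
      ≤ lse (-β) (fun k => lse β (fun j =>
        (∑ i, wc k j i * xc' i) + (∑ i, wfree k j i * xu i)
          + (∑ i, Ψ k j xu i * xc' i) + (∑ m, wu k j m * Φ k j xu m) - b k j)) := by
  apply lse_mono (by linarith : -β ≠ 0)
  intro k
  apply lse_mono hβ.ne'
  intro j
  have h1 : ∑ i, wc k j i * xc i ≤ ∑ i, wc k j i * xc' i :=
    Finset.sum_le_sum fun i _ => mul_le_mul_of_nonneg_left (hx i) (hwc k j i)
  have h2 : ∑ i, Ψ k j xu i * xc i ≤ ∑ i, Ψ k j xu i * xc' i :=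
    Finset.sum_le_sum fun i _ => mul_le_mul_of_nonneg_left (hx i) (hΨ k j xu i).1
  linarith
end

section
/- (Daniels & Velikova, Theorem 3.1) Let S ⊂ ℝ^d be compact and let f: S → ℝ be continuous and coordinatewise non-decreasing. Then for every ε > 0 there exists a feedforward neural network with at most d hidden layers, logistic sigmoid activations σ(t) = 1/(1+exp(−t)) applied coordinatewise in all hidden layers, a single linear output neuron, all weights nonnegative, and arbitrary real biases, whose output function N satisfies |f(x) − N(x)| < ε for all x ∈ S. -/
/-!
If bounded sets `A` and `B` are separated by a gap `κ` in one of `e + 1` given coordinates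
(every `b ∈ B` exceeds every `a ∈ A` by `κ` in one of them), then depth-`e` nets with
nonnegative weights separate them with any margin. Induction on `e`: pick one coordinate `p`
and build `h`, monotone and one-sidedly Lipschitz in the other `e` coordinates, such that
`h + x p` is `≤ -κ/2` on `A` and `≥ κ/2` on `B`. A function that is monotone and one-sidedly
Lipschitz in some coordinates has level sets gap-separated in those coordinates, so by
induction it is uniformly approximated by a staircase `∑ₖ η σ(Fₖ) + c` of depth `e + 1` whose
steps `Fₖ` are depth-`e` classifiers of its level sets. Doing this for `h` and for `x p`
approximates `h + x p`, which separates `A` from `B`.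

For the theorem, `f` is approximated by the same staircase, its level sets being gap-separated
by monotonicity and compactness; the tree of units is then flattened into layers.
-/

/-- The logistic sigmoid `σ(t) = 1/(1+exp(−t))`. -/
noncomputable def logisticSigmoid (t : ℝ) : ℝ := 1 / (1 + Real.exp (-t))

/-- Hidden representation after `L` hidden layers of a feedforward network with logistic
sigmoid activations applied coordinatewise:
`x^(0) = x` and `x^(l+1) = σ(W_{l+1} x^(l) + b_{l+1})`. -/
noncomputable def sigmoidLayers (dims : ℕ → ℕ)
    (W : (l : ℕ) → Fin (dims (l + 1)) → Fin (dims l) → ℝ)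
    (b : (l : ℕ) → Fin (dims (l + 1)) → ℝ) :
    (L : ℕ) → (Fin (dims 0) → ℝ) → Fin (dims L) → ℝ
  | 0, x => x
  | L + 1, x => fun i =>
      logisticSigmoid ((∑ m, W L i m * sigmoidLayers dims W b L x m) + b L i)

open Real Finset Bornology

theorem logisticSigmoid_nonneg (t : ℝ) : 0 ≤ logisticSigmoid t := by
  unfold logisticSigmoid; positivity

theorem logisticSigmoid_le_one (t : ℝ) : logisticSigmoid t ≤ 1 := by
  unfold logisticSigmoid
  rw [div_le_one (by positivity)]
  linarith [exp_pos (-t)]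

theorem logisticSigmoid_le_exp (t : ℝ) : logisticSigmoid t ≤ exp t := by
  unfold logisticSigmoid
  rw [div_le_iff₀ (by positivity), mul_add, mul_one, ← exp_add, add_neg_cancel, exp_zero]
  linarith [exp_pos t]

theorem one_sub_logisticSigmoid (t : ℝ) : 1 - logisticSigmoid t = logisticSigmoid (-t) := by
  unfold logisticSigmoid
  rw [neg_neg, exp_neg]
  field_simp
  ring

/-- The tree-shaped form of a depth-`L` network with nonnegative weights. -/
def IsNonnegNet (n : ℕ) : ℕ → ((Fin n → ℝ) → ℝ) → Prop
  | 0, F => ∃ (w : Fin n → ℝ) (c : ℝ), (∀ i, 0 ≤ w i) ∧ ∀ x, F x = (∑ i, w i * x i) + c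
  | L + 1, F => ∃ (m : ℕ) (w : Fin m → ℝ) (G : Fin m → (Fin n → ℝ) → ℝ) (c : ℝ),
      (∀ j, 0 ≤ w j) ∧ (∀ j, IsNonnegNet n L (G j)) ∧
      ∀ x, F x = (∑ j, w j * logisticSigmoid (G j x)) + c

namespace IsNonnegNet

variable {n : ℕ}

theorem const (L : ℕ) (c : ℝ) : IsNonnegNet n L fun _ => c := by
  cases L with
  | zero => exact ⟨0, c, fun _ => le_rfl, by simp⟩
  | succ L => exact ⟨0, finZeroElim, finZeroElim, c, finZeroElim, finZeroElim, by simp⟩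

theorem apply_add_const (p : Fin n) (c : ℝ) : IsNonnegNet n 0 fun x => x p + c := by
  refine ⟨Pi.single p 1, c, fun i => ?_, fun x => by simp [Pi.single_apply]⟩
  rcases eq_or_ne i p with rfl | hi <;> simp [*]

theorem add {L : ℕ} {F G : (Fin n → ℝ) → ℝ} (hF : IsNonnegNet n L F) (hG : IsNonnegNet n L G) :
    IsNonnegNet n L fun x => F x + G x := by
  cases L with
  | zero =>
    obtain ⟨w, c, hw, hF⟩ := hF
    obtain ⟨w', c', hw', hG⟩ := hG
    exact ⟨w + w', c + c', fun i => add_nonneg (hw i) (hw' i), fun x => by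
      simp only [hF, hG, Pi.add_apply, add_mul, sum_add_distrib]; ring⟩
  | succ L =>
    obtain ⟨m, w, F', c, hw, hF', hF⟩ := hF
    obtain ⟨m', w', G', c', hw', hG', hG⟩ := hG
    refine ⟨m + m', Fin.append w w', Fin.append F' G', c + c',
      Fin.addCases (by simpa using hw) (by simpa using hw'),
      Fin.addCases (by simpa using hF') (by simpa using hG'), fun x => ?_⟩
    simp only [hF, hG, Fin.sum_univ_add, Fin.append_left, Fin.append_right]; ring

theorem const_mul {L : ℕ} {F : (Fin n → ℝ) → ℝ} (hF : IsNonnegNet n L F) {a : ℝ} (ha : 0 ≤ a) :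
    IsNonnegNet n L fun x => a * F x := by
  cases L with
  | zero =>
    obtain ⟨w, c, hw, hF⟩ := hF
    exact ⟨a • w, a * c, fun i => mul_nonneg ha (hw i), fun x => by
      simp only [hF, Pi.smul_apply, smul_eq_mul, mul_add, mul_sum, mul_assoc]⟩
  | succ L =>
    obtain ⟨m, w, G, c, hw, hG, hF⟩ := hF
    exact ⟨m, a • w, G, a * c, fun j => mul_nonneg ha (hw j), hG, fun x => by
      simp only [hF, Pi.smul_apply, smul_eq_mul, mul_add, mul_sum, mul_assoc]⟩

end IsNonnegNet

theorem abs_mul_sum_sub_le {η ρ v : ℝ} {K : ℕ} {s : ℕ → ℝ} (hη : 0 ≤ η) (hρ : 0 ≤ ρ)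
    (hs : ∀ k, s k ∈ Set.Icc 0 1) (hlo : ∀ k : ℕ, v ≤ k * η → s k ≤ ρ)
    (hhi : ∀ k : ℕ, (k + 1) * η ≤ v → 1 - ρ ≤ s k) (hv : v ∈ Set.Icc 0 (K * η)) :
    |η * ∑ k ∈ range K, s k - v| ≤ η + K * η * ρ := by
  -- compare `η s k` with the ramp `min u ((k+1) η) - min u (k η)`, whose sum telescopes
  have telescope (u : ℝ) :
      ∑ k ∈ range K, (min u ((k + 1) * η) - min u (k * η)) = min u (K * η) - min u 0 := by
    simpa using sum_range_sub (fun k : ℕ => min u (k * η)) K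
  have upper (k : ℕ) : η * s k ≤ min (v + η) ((k + 1) * η) - min (v + η) (k * η) + η * ρ := by
    obtain ⟨hs0, hs1⟩ := hs k
    by_cases hk : v ≤ k * η
    · have := hlo k hk
      have : min (v + η) (k * η) ≤ min (v + η) ((k + 1) * η) := min_le_min_left _ (by nlinarith)
      nlinarith
    · rw [min_eq_right (by linarith), min_eq_right (by linarith)]
      nlinarith
  have lower (k : ℕ) : min (v - η) ((k + 1) * η) - min (v - η) (k * η) - η * ρ ≤ η * s k := by
    obtain ⟨hs0, hs1⟩ := hs k
    by_cases hk : (k + 1) * η ≤ v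
    · have := hhi k hk
      have : min (v - η) ((k + 1) * η) ≤ min (v - η) (k * η) + η := by
        rw [← min_add_add_right]; exact min_le_min (by linarith) (by linarith)
      nlinarith
    · rw [min_eq_left (by linarith), min_eq_left (by linarith)]
      nlinarith
  have hsum_upper := sum_le_sum fun k (_ : k ∈ range K) => upper k
  have hsum_lower := sum_le_sum fun k (_ : k ∈ range K) => lower k
  simp only [sum_add_distrib, sum_sub_distrib, telescope, ← mul_sum, sum_const, card_range,
    nsmul_eq_mul] at hsum_upper hsum_lower
  obtain ⟨hv0, hvK⟩ := hv
  rw [abs_le]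
  constructor
  · have : min (v - η) (K * η) = v - η := min_eq_left (by linarith)
    have : min (v - η) 0 ≤ 0 := min_le_right _ _
    nlinarith
  · have : min (v + η) (K * η) ≤ v + η := min_le_left _ _
    have : min (v + η) 0 = 0 := min_eq_right (by linarith)
    nlinarith

def NetSeparable (n L : ℕ) (A B : Set (Fin n → ℝ)) : Prop :=
  ∀ T : ℝ, ∃ F, IsNonnegNet n L F ∧ (∀ a ∈ A, F a ≤ -T) ∧ ∀ b ∈ B, T ≤ F b

section Separation

variable {n L : ℕ} {A B C : Set (Fin n → ℝ)}

theorem NetSeparable.of_margin {F : (Fin n → ℝ) → ℝ} (hF : IsNonnegNet n L F) {μ : ℝ}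
    (hμ : 0 < μ) (hA : ∀ a ∈ A, F a ≤ -μ) (hB : ∀ b ∈ B, μ ≤ F b) : NetSeparable n L A B := by
  intro T
  have hc : 0 ≤ max T 0 / μ := by positivity
  refine ⟨fun x => max T 0 / μ * F x, hF.const_mul hc, fun a ha => ?_, fun b hb => ?_⟩
  · calc max T 0 / μ * F a ≤ max T 0 / μ * -μ := mul_le_mul_of_nonneg_left (hA a ha) hc
      _ = -max T 0 := by field_simp
      _ ≤ -T := neg_le_neg (le_max_left _ _)
  · calc T ≤ max T 0 := le_max_left _ _
      _ = max T 0 / μ * μ := by field_simp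
      _ ≤ max T 0 / μ * F b := mul_le_mul_of_nonneg_left (hB b hb) hc

theorem exists_approx_of_netSeparable {g : (Fin n → ℝ) → ℝ} {lo hi η : ℝ}
    (hg : ∀ x ∈ C, g x ∈ Set.Icc lo hi) (hη : 0 < η)
    (hsep : ∀ t, NetSeparable n L {x ∈ C | g x ≤ t} {x ∈ C | t + η ≤ g x}) :
    ∃ G, IsNonnegNet n (L + 1) G ∧ ∀ x ∈ C, |G x - g x| ≤ 2 * η := by
  obtain ⟨K, hK⟩ : ∃ K : ℕ, hi - lo ≤ K * η :=
    ⟨⌈(hi - lo) / η⌉₊, (div_le_iff₀ hη).mp (Nat.le_ceil _)⟩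
  -- with margin `log (K + 1)` each unit is within `1 / (K + 1)` of a unit step
  set ρ : ℝ := ((K : ℝ) + 1)⁻¹
  have hρ : exp (-log (K + 1)) = ρ := by rw [exp_neg, exp_log (by positivity)]
  have hKρ : K * ρ ≤ 1 := by
    rw [← div_eq_mul_inv, div_le_one (by positivity)]; linarith
  choose F hF hFlo hFhi using fun k : ℕ => hsep (lo + k * η) (log (K + 1))
  refine ⟨fun x => (∑ k : Fin K, η * logisticSigmoid (F k x)) + lo,
    ⟨K, fun _ => η, fun k => F k, lo, fun _ => hη.le, fun k => hF k, fun x => rfl⟩,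
    fun x hx => ?_⟩
  obtain ⟨hlo, hhi⟩ := hg x hx
  have below (k : ℕ) (hk : g x - lo ≤ k * η) : logisticSigmoid (F k x) ≤ ρ :=
    hρ ▸ (logisticSigmoid_le_exp _).trans (exp_le_exp.mpr (hFlo k x ⟨hx, by linarith⟩))
  have above (k : ℕ) (hk : (k + 1) * η ≤ g x - lo) : 1 - ρ ≤ logisticSigmoid (F k x) := by
    have := (logisticSigmoid_le_exp (-F k x)).trans
      (exp_le_exp.mpr (neg_le_neg (hFhi k x ⟨hx, by linarith⟩)))
    rw [← one_sub_logisticSigmoid, hρ] at this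
    linarith
  have hstep := abs_mul_sum_sub_le hη.le (by positivity)
    (fun k => ⟨logisticSigmoid_nonneg (F k x), logisticSigmoid_le_one _⟩) below above
    ⟨by linarith, by linarith⟩
  dsimp only
  rw [Fin.sum_univ_eq_sum_range (fun k => η * logisticSigmoid (F k x)), ← mul_sum]
  calc |η * ∑ k ∈ range K, logisticSigmoid (F k x) + lo - g x|
      = |η * ∑ k ∈ range K, logisticSigmoid (F k x) - (g x - lo)| := by ring_nf
    _ ≤ η + K * η * ρ := hstep
    _ ≤ 2 * η := by nlinarith

end Separation

section Coordinates

variable {ι : Type*} {s : Finset ι} {κ L : ℝ} {A B C : Set (ι → ℝ)}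

def GapSeparated (s : Finset ι) (κ : ℝ) (A B : Set (ι → ℝ)) : Prop :=
  ∀ a ∈ A, ∀ b ∈ B, ∃ i ∈ s, a i + κ ≤ b i

theorem exists_gapSeparated_of_isCompact (hA : IsCompact A) (hB : IsCompact B)
    (h : ∀ a ∈ A, ∀ b ∈ B, ∃ i ∈ s, a i < b i) : ∃ κ > 0, GapSeparated s κ A B := by
  rcases (A ×ˢ B).eq_empty_or_nonempty with hAB | ⟨q, hq⟩
  · refine ⟨1, one_pos, fun a ha b hb => ?_⟩
    exact absurd (Set.mk_mem_prod ha hb) (hAB ▸ Set.notMem_empty _)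
  obtain ⟨j, hj, -⟩ := h q.1 hq.1 q.2 hq.2
  have hs : s.Nonempty := ⟨j, hj⟩
  set φ : (ι → ℝ) × (ι → ℝ) → ℝ := fun q => s.sup' hs fun i => q.2 i - q.1 i
  have hφ : Continuous φ := Continuous.finset_sup'_apply hs fun i _ =>
    ((continuous_apply i).comp continuous_snd).sub ((continuous_apply i).comp continuous_fst)
  obtain ⟨q₀, hq₀, hmin⟩ := (hA.prod hB).exists_isMinOn ⟨q, hq⟩ hφ.continuousOn
  refine ⟨φ q₀, ?_, fun a ha b hb => ?_⟩
  · obtain ⟨i, hi, hlt⟩ := h q₀.1 hq₀.1 q₀.2 hq₀.2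
    exact (sub_pos.mpr hlt).trans_le (le_sup' (fun i => q₀.2 i - q₀.1 i) hi)
  · obtain ⟨i, hi, hφi⟩ := exists_mem_eq_sup' hs fun i => b i - a i
    have : φ q₀ ≤ φ (a, b) := hmin (Set.mk_mem_prod ha hb)
    exact ⟨i, hi, by simp only [φ] at this; linarith⟩

theorem apply_le_apply_add_of_dist_le [Fintype ι] {x y : ι → ℝ} {D : ℝ} (h : dist x y ≤ D)
    (i : ι) : x i ≤ y i + D := by
  have := (dist_le_pi_dist x y i).trans h
  rw [Real.dist_eq] at this
  linarith [le_abs_self (x i - y i)]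

def MonotoneLipschitzWith (s : Finset ι) (L : ℝ) (g : (ι → ℝ) → ℝ) : Prop :=
  ∀ x y δ, 0 ≤ δ → (∀ i ∈ s, y i ≤ x i + δ) → g y ≤ g x + L * δ

theorem monotoneLipschitzWith_apply [DecidableEq ι] (p : ι) :
    MonotoneLipschitzWith {p} 1 fun x => x p :=
  fun x y δ _ h => by simpa using h p (mem_singleton_self p)

namespace MonotoneLipschitzWith

variable {g : (ι → ℝ) → ℝ}

theorem gapSeparated (hg : MonotoneLipschitzWith s L g) (hL : 0 ≤ L) {η : ℝ} (hη : 0 < η)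
    (t : ℝ) : GapSeparated s (η / (L + 1)) {x ∈ C | g x ≤ t} {x ∈ C | t + η ≤ g x} := by
  intro a ha b hb
  by_contra! hlt
  have hab := hg a b (η / (L + 1)) (by positivity) fun i hi => (hlt i hi).le
  have : L * (η / (L + 1)) < η := by
    rw [mul_div_assoc', div_lt_iff₀ (by positivity)]; linarith
  linarith [ha.2, hb.2]

theorem exists_bounds [Fintype ι] (hg : MonotoneLipschitzWith s L g) (hC : IsBounded C) :
    ∃ lo hi, ∀ x ∈ C, g x ∈ Set.Icc lo hi := by
  rcases C.eq_empty_or_nonempty with rfl | ⟨c, hc⟩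
  · exact ⟨0, 0, by simp⟩
  obtain ⟨D, hD⟩ := Metric.isBounded_iff.mp hC
  have hD₀ : 0 ≤ D := dist_nonneg.trans (hD hc hc)
  refine ⟨g c - L * D, g c + L * D, fun x hx => ⟨?_, ?_⟩⟩
  · linarith [hg x c D hD₀ fun i _ => apply_le_apply_add_of_dist_le (hD hc hx) i]
  · exact hg c x D hD₀ fun i _ => apply_le_apply_add_of_dist_le (hD hx hc) i

end MonotoneLipschitzWith

def shortfall (s : Finset ι) (b x : ι → ℝ) : ℝ := ∑ i ∈ s, max (b i - x i) 0

theorem shortfall_nonneg (s : Finset ι) (b x : ι → ℝ) : 0 ≤ shortfall s b x :=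
  sum_nonneg fun _ _ => le_max_right _ _

theorem shortfall_self (s : Finset ι) (b : ι → ℝ) : shortfall s b b = 0 := by
  simp [shortfall]

theorem le_shortfall {b x : ι → ℝ} {i : ι} (hi : i ∈ s) (h : x i + κ ≤ b i) :
    κ ≤ shortfall s b x :=
  calc κ ≤ max (b i - x i) 0 := le_max_of_le_left (by linarith)
    _ ≤ shortfall s b x := single_le_sum (f := fun i => max (b i - x i) 0)
      (fun _ _ => le_max_right _ _) hi

theorem shortfall_le_add {b x y : ι → ℝ} {δ : ℝ} (hδ : 0 ≤ δ) (h : ∀ i ∈ s, y i ≤ x i + δ) :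
    shortfall s b x ≤ shortfall s b y + s.card * δ := by
  rw [shortfall, shortfall, ← nsmul_eq_mul, ← sum_const, ← sum_add_distrib]
  refine sum_le_sum fun i hi => max_le ?_ (by positivity)
  linarith [h i hi, le_max_left (b i - y i) 0]

/-- The separating function is `κ/2 - τ` with `τ x = inf_{b ∈ B} (b p + c · shortfall b x)`:
`τ b ≤ b p` on `B`, while at `a ∈ A` either the gap is in coordinate `p` or the shortfall is at
least `κ`, which the large constant `c` turns into `τ a ≥ a p + κ`. -/
theorem GapSeparated.exists_monotoneLipschitzWith [Fintype ι] [DecidableEq ι] {p : ι}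
    (hgap : GapSeparated s κ A B) (hp : p ∈ s) (hκ : 0 < κ) (hA : IsBounded A)
    (hB : IsBounded B) (hB₀ : B.Nonempty) :
    ∃ h L, 0 ≤ L ∧ MonotoneLipschitzWith (s.erase p) L h ∧
      (∀ a ∈ A, h a + a p ≤ -(κ / 2)) ∧ ∀ b ∈ B, κ / 2 ≤ h b + b p := by
  obtain ⟨D, hD⟩ := Metric.isBounded_iff.mp (hA.union hB)
  obtain ⟨b₀, hb₀⟩ := hB₀
  have hD₀ : 0 ≤ D := dist_nonneg.trans (hD (.inr hb₀) (.inr hb₀))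
  set c := D / κ + 1
  have hc₀ : 0 ≤ c := by positivity
  have hc : c * κ = D + κ := by rw [add_mul, div_mul_cancel₀ _ hκ.ne', one_mul]
  set τ : (ι → ℝ) → ℝ := fun x => sInf ((fun b => b p + c * shortfall (s.erase p) b x) '' B)
  have τ_le {x b} (hb : b ∈ B) : τ x ≤ b p + c * shortfall (s.erase p) b x := by
    refine csInf_le ⟨b₀ p - D, Set.forall_mem_image.mpr fun b' hb' => ?_⟩
      (Set.mem_image_of_mem _ hb)
    linarith [apply_le_apply_add_of_dist_le (hD (.inr hb₀) (.inr hb')) p,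
      mul_nonneg hc₀ (shortfall_nonneg (s.erase p) b' x)]
  have le_τ {x r} (h : ∀ b ∈ B, r ≤ b p + c * shortfall (s.erase p) b x) : r ≤ τ x :=
    le_csInf (Set.Nonempty.image _ ⟨b₀, hb₀⟩) (Set.forall_mem_image.mpr h)
  refine ⟨fun x => κ / 2 - τ x, c * (s.erase p).card, by positivity,
    fun x y δ hδ hxy => ?_, fun a ha => ?_, fun b hb => ?_⟩
  · have : τ x - c * (s.erase p).card * δ ≤ τ y := le_τ fun b hb => by
      linarith [τ_le (x := x) hb, mul_le_mul_of_nonneg_left (shortfall_le_add (b := b) hδ hxy) hc₀]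
    dsimp only; linarith
  · have : a p + κ ≤ τ a := le_τ fun b hb => by
      obtain ⟨i, hi, hgap⟩ := hgap a ha b hb
      by_cases hip : i = p
      · subst hip
        linarith [mul_nonneg hc₀ (shortfall_nonneg (s.erase i) b a)]
      · linarith [apply_le_apply_add_of_dist_le (hD (.inl ha) (.inr hb)) p,
          mul_le_mul_of_nonneg_left (le_shortfall (mem_erase.mpr ⟨hip, hi⟩) hgap) hc₀]
    dsimp only; linarith
  · have := τ_le (x := b) hb
    rw [shortfall_self, mul_zero, add_zero] at this
    dsimp only; linarith

end Coordinates

section Approximation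

variable {n : ℕ}

theorem MonotoneLipschitzWith.exists_approx {e : ℕ} {s : Finset (Fin n)} {L : ℝ}
    {g : (Fin n → ℝ) → ℝ} {C : Set (Fin n → ℝ)} (hg : MonotoneLipschitzWith s L g) (hL : 0 ≤ L)
    (hC : IsBounded C)
    (hsep : ∀ {κ : ℝ} {A B : Set (Fin n → ℝ)}, GapSeparated s κ A B → 0 < κ → IsBounded A →
      IsBounded B → NetSeparable n e A B)
    {ε : ℝ} (hε : 0 < ε) : ∃ G, IsNonnegNet n (e + 1) G ∧ ∀ x ∈ C, |G x - g x| ≤ ε := by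
  obtain ⟨lo, hi, hbounds⟩ := hg.exists_bounds hC
  obtain ⟨G, hG, hGg⟩ := exists_approx_of_netSeparable hbounds (half_pos hε) fun t =>
    hsep (hg.gapSeparated hL (half_pos hε) t) (by positivity) (hC.subset (Set.sep_subset _ _))
      (hC.subset (Set.sep_subset _ _))
  exact ⟨G, hG, fun x hx => (hGg x hx).trans_eq (by ring)⟩

theorem GapSeparated.netSeparable {e : ℕ} {s : Finset (Fin n)} {κ : ℝ}
    {A B : Set (Fin n → ℝ)} (hgap : GapSeparated s κ A B) (hs : s.card ≤ e + 1) (hκ : 0 < κ)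
    (hA : IsBounded A) (hB : IsBounded B) : NetSeparable n e A B := by
  induction e using Nat.strong_induction_on generalizing s κ A B with
  | _ e ih =>
    rcases A.eq_empty_or_nonempty with rfl | ⟨a₀, ha₀⟩
    · exact .of_margin (IsNonnegNet.const e 1) one_pos (by simp) fun _ _ => le_rfl
    rcases B.eq_empty_or_nonempty with rfl | ⟨b₀, hb₀⟩
    · exact .of_margin (IsNonnegNet.const e (-1)) one_pos (fun _ _ => le_rfl) (by simp)
    obtain ⟨p, hp, -⟩ := hgap a₀ ha₀ b₀ hb₀
    obtain ⟨h, L, hL, hh, hhA, hhB⟩ := hgap.exists_monotoneLipschitzWith hp hκ hA hB ⟨b₀, hb₀⟩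
    have hcard : (s.erase p).card ≤ e := by rw [card_erase_of_mem hp]; omega
    rcases e with _ | e
    · have hconst (x : Fin n → ℝ) : h x = h 0 := by
        have hempty : s.erase p = ∅ := card_eq_zero.mp (Nat.le_zero.mp hcard)
        exact le_antisymm (by simpa using hh 0 x 0 le_rfl (by simp [hempty]))
          (by simpa using hh x 0 0 le_rfl (by simp [hempty]))
      refine .of_margin (IsNonnegNet.apply_add_const p (h 0)) (half_pos hκ) (fun a ha => ?_)
        fun b hb => ?_
      · linarith [hhA a ha, hconst a]
      · linarith [hhB b hb, hconst b]
    have hC := hA.union hB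
    have hsep {s' : Finset (Fin n)} (hs' : s'.card ≤ e + 1) {κ' : ℝ} {A' B' : Set (Fin n → ℝ)}
        (hgap' : GapSeparated s' κ' A' B') (hκ' : 0 < κ') (hA' : IsBounded A')
        (hB' : IsBounded B') : NetSeparable n e A' B' :=
      ih e (by omega) hgap' hs' hκ' hA' hB'
    obtain ⟨P, hP, hPp⟩ := (monotoneLipschitzWith_apply p).exists_approx zero_le_one hC
      (hsep (by simp)) (by positivity : 0 < κ / 8)
    obtain ⟨G, hG, hGh⟩ := hh.exists_approx hL hC (hsep hcard) (by positivity : 0 < κ / 8)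
    refine .of_margin (hP.add hG) (by positivity : 0 < κ / 4) (fun a ha => ?_) fun b hb => ?_
    · have := abs_le.mp (hPp a (.inl ha))
      have := abs_le.mp (hGh a (.inl ha))
      linarith [hhA a ha]
    · have := abs_le.mp (hPp b (.inr hb))
      have := abs_le.mp (hGh b (.inr hb))
      linarith [hhB b hb]

theorem exists_approx_of_monotoneOn {e : ℕ} {S : Set (Fin (e + 1) → ℝ)}
    {f : (Fin (e + 1) → ℝ) → ℝ} (hS : IsCompact S) (hf : ContinuousOn f S)
    (hmono : ∀ x ∈ S, ∀ x' ∈ S, (∀ i, x i ≤ x' i) → f x ≤ f x') {ε : ℝ} (hε : 0 < ε) :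
    ∃ G, IsNonnegNet (e + 1) (e + 1) G ∧ ∀ x ∈ S, |f x - G x| < ε := by
  obtain ⟨M, hM⟩ := hS.exists_bound_of_continuousOn hf
  have hlevel {t : Set ℝ} (ht : IsClosed t) : IsCompact {x ∈ S | f x ∈ t} :=
    hS.of_isClosed_subset (hf.preimage_isClosed_of_isClosed hS.isClosed ht) (Set.sep_subset _ _)
  obtain ⟨G, hG, hGf⟩ := exists_approx_of_netSeparable (C := S) (lo := -M) (hi := M)
    (fun x hx => abs_le.mp (hM x hx)) (by positivity : 0 < ε / 4) fun t => by
      obtain ⟨κ, hκ, hgap⟩ := exists_gapSeparated_of_isCompact (s := univ)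
        (hlevel (t := Set.Iic t) isClosed_Iic) (hlevel (t := Set.Ici (t + ε / 4)) isClosed_Ici)
        fun a ha b hb => by
          by_contra! hle
          linarith [hmono b hb.1 a ha.1 fun i => hle i (mem_univ i), Set.mem_Iic.mp ha.2,
            Set.mem_Ici.mp hb.2]
      exact hgap.netSeparable (e := e) (by simp) hκ (hS.isBounded.subset (Set.sep_subset _ _))
        (hS.isBounded.subset (Set.sep_subset _ _))
  exact ⟨G, hG, fun x hx => by rw [abs_sub_comm]; linarith [hGf x hx]⟩

end Approximation

section Realization

open Function

/-- `sigmoidLayers` with widths, units and inputs indexed by `ℕ`, so that a layer can be put on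
top of a network without changing the types of the layers below. -/
noncomputable def natLayers (w : ℕ → ℕ) (W : ℕ → ℕ → ℕ → ℝ) (b : ℕ → ℕ → ℝ) :
    ℕ → (ℕ → ℝ) → ℕ → ℝ
  | 0, x => x
  | L + 1, x => fun i =>
      logisticSigmoid ((∑ m ∈ range (w L), W L i m * natLayers w W b L x m) + b L i)

theorem sigmoidLayers_eq_natLayers (w : ℕ → ℕ) (W : ℕ → ℕ → ℕ → ℝ) (b : ℕ → ℕ → ℝ) (L : ℕ)
    {x : Fin (w 0) → ℝ} {x' : ℕ → ℝ} (hx : ∀ i, x i = x' i) (i : Fin (w L)) :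
    sigmoidLayers w (fun l i m => W l i m) (fun l i => b l i) L x i =
      natLayers w W b L x' i := by
  induction L with
  | zero => exact hx i
  | succ L ih =>
    simp only [sigmoidLayers, natLayers, ih,
      ← Fin.sum_univ_eq_sum_range fun m => W L i m * natLayers w W b L x' m]

theorem natLayers_congr {w w' : ℕ → ℕ} {W W' : ℕ → ℕ → ℕ → ℝ} {b b' : ℕ → ℕ → ℝ} {L : ℕ}
    (hw : ∀ l < L, w l = w' l) (hW : ∀ l < L, W l = W' l) (hb : ∀ l < L, b l = b' l) :
    natLayers w W b L = natLayers w' W' b' L := by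
  induction L with
  | zero => rfl
  | succ L ih =>
    funext x i
    simp only [natLayers, hw L L.lt_succ_self, hW L L.lt_succ_self, hb L L.lt_succ_self,
      ih (fun l hl => hw l (by omega)) (fun l hl => hW l (by omega)) fun l hl => hb l (by omega)]

theorem natLayers_update (w : ℕ → ℕ) (W : ℕ → ℕ → ℕ → ℝ) (b : ℕ → ℕ → ℝ) (L N : ℕ)
    (V : ℕ → ℕ → ℝ) (β : ℕ → ℝ) (x : ℕ → ℝ) (i : ℕ) :
    natLayers (update w (L + 1) N) (update W L V) (update b L β) (L + 1) x i =
      logisticSigmoid ((∑ m ∈ range (w L), V i m * natLayers w W b L x m) + β i) := by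
  rw [natLayers, update_of_ne (by omega), update_self, update_self,
    natLayers_congr (w' := w) (W' := W) (b' := b) (fun l hl => update_of_ne (by omega) _ _)
      (fun l hl => update_of_ne (by omega) _ _) fun l hl => update_of_ne (by omega) _ _]

def finExtend {N : ℕ} (f : Fin N → ℝ) (i : ℕ) : ℝ := if h : i < N then f ⟨i, h⟩ else 0

theorem finExtend_apply {N : ℕ} (f : Fin N → ℝ) (i : Fin N) : finExtend f i = f i :=
  dif_pos i.isLt

theorem finExtend_nonneg {N : ℕ} {f : Fin N → ℝ} (hf : ∀ i, 0 ≤ f i) (i : ℕ) :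
    0 ≤ finExtend f i := by
  unfold finExtend; split_ifs
  exacts [hf _, le_rfl]

theorem sum_range_finExtend_mul {N : ℕ} (f : Fin N → ℝ) (g : ℕ → ℝ) :
    ∑ i ∈ range N, finExtend f i * g i = ∑ i, f i * g i := by
  simp only [← Fin.sum_univ_eq_sum_range fun i => finExtend f i * g i, finExtend_apply]

variable {n : ℕ}

/-- The top units of all members of the family form one new layer on top of a network that
computes all their summands. -/
theorem IsNonnegNet.exists_natLayers {L : ℕ} {ι : Type} [Fintype ι]
    {G : ι → (Fin n → ℝ) → ℝ} (hG : ∀ j, IsNonnegNet n L (G j)) :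
    ∃ (w : ℕ → ℕ) (W : ℕ → ℕ → ℕ → ℝ) (b : ℕ → ℕ → ℝ) (v : ι → ℕ → ℝ) (c : ι → ℝ),
      w 0 = n ∧ (∀ l i m, 0 ≤ W l i m) ∧ (∀ j i, 0 ≤ v j i) ∧
      ∀ x j, G j x = (∑ i ∈ range (w L), v j i * natLayers w W b L (finExtend x) i) + c j := by
  induction L generalizing ι with
  | zero =>
    choose u c hu hG using hG
    refine ⟨fun _ => n, 0, 0, fun j => finExtend (u j), c, rfl, fun _ _ _ => le_rfl,
      fun j => finExtend_nonneg (hu j), fun x j => ?_⟩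
    simp only [natLayers, sum_range_finExtend_mul, finExtend_apply, hG]
  | succ L ih =>
    classical
    choose m u H c hu hH hG using hG
    obtain ⟨w, W, b, v, c', hw, hW, hv, hH⟩ := ih (ι := Σ j, Fin (m j)) fun p => hH p.1 p.2
    set N := Fintype.card (Σ j, Fin (m j))
    set e := Fintype.equivFin (Σ j, Fin (m j))
    set V : ℕ → ℕ → ℝ := fun i k => finExtend (fun q => v (e.symm q) k) i
    set β : ℕ → ℝ := finExtend fun q => c' (e.symm q)
    have hunit (x : Fin n → ℝ) (q : Fin N) :
        natLayers (update w (L + 1) N) (update W L V) (update b L β) (L + 1) (finExtend x) q =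
          logisticSigmoid (H (e.symm q).1 (e.symm q).2 x) := by
      simp only [natLayers_update, V, β, finExtend_apply, hH]
    refine ⟨update w (L + 1) N, update W L V, update b L β,
      fun j => finExtend fun q => if (e.symm q).1 = j then u _ (e.symm q).2 else 0, c,
      by rw [update_of_ne (by omega)]; exact hw, fun l i k => ?_,
      fun j => finExtend_nonneg fun q => ?_, fun x j => ?_⟩
    · rcases eq_or_ne l L with rfl | hl
      · rw [update_self]; exact finExtend_nonneg (fun q => hv _ _) i
      · rw [update_of_ne hl]; exact hW l i k
    · split_ifs
      exacts [hu _ _, le_rfl]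
    · rw [update_self, sum_range_finExtend_mul, hG]
      simp only [hunit, ite_mul, zero_mul]
      rw [e.symm.sum_comp fun p =>
          if p.1 = j then u p.1 p.2 * logisticSigmoid (H p.1 p.2 x) else 0, Fintype.sum_sigma]
      simp

theorem IsNonnegNet.exists_sigmoidLayers {L : ℕ} {F : (Fin n → ℝ) → ℝ}
    (hF : IsNonnegNet n L F) :
    ∃ (dims : ℕ → ℕ) (hd : dims 0 = n) (W : (l : ℕ) → Fin (dims (l + 1)) → Fin (dims l) → ℝ)
      (b : (l : ℕ) → Fin (dims (l + 1)) → ℝ) (wout : Fin (dims L) → ℝ) (bout : ℝ),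
      (∀ l i m, 0 ≤ W l i m) ∧ (∀ i, 0 ≤ wout i) ∧ ∀ x,
        F x = (∑ i, wout i * sigmoidLayers dims W b L (fun i => x (Fin.cast hd i)) i) + bout := by
  obtain ⟨w, W, b, v, c, hw, hW, hv, hF⟩ := exists_natLayers (ι := Unit) fun _ => hF
  refine ⟨w, hw, fun l i m => W l i m, fun l i => b l i, fun i => v () i, c (),
    fun l i m => hW l i m, fun i => hv () i, fun x => ?_⟩
  rw [hF x (), ← Fin.sum_univ_eq_sum_range fun i => v () i * natLayers w W b L (finExtend x) i]
  congr 1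
  refine sum_congr rfl fun i _ => ?_
  rw [sigmoidLayers_eq_natLayers w W b L fun i => ?_]
  rw [finExtend, dif_pos (hw ▸ i.isLt)]
  rfl

end Realization

/-- (Daniels & Velikova, Theorem 3.1) Every continuous, coordinatewise non-decreasing
function on a compact set `S ⊂ ℝ^d` can be uniformly approximated to within any `ε > 0`
by a feedforward network with at most `d` hidden layers, logistic sigmoid activations in
the hidden layers, a single linear output neuron, nonnegative weights, and arbitrary
biases. -/
theorem daniels_velikova {d : ℕ} (S : Set (Fin d → ℝ)) (hS : IsCompact S)
    (f : (Fin d → ℝ) → ℝ) (hcont : ContinuousOn f S)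
    (hmono : ∀ x ∈ S, ∀ x' ∈ S, (∀ i, x i ≤ x' i) → f x ≤ f x')
    (ε : ℝ) (hε : 0 < ε) :
    ∃ (dims : ℕ → ℕ) (hd : dims 0 = d) (L : ℕ),
      L ≤ d ∧
      ∃ (W : (l : ℕ) → Fin (dims (l + 1)) → Fin (dims l) → ℝ)
        (b : (l : ℕ) → Fin (dims (l + 1)) → ℝ)
        (wout : Fin (dims L) → ℝ) (bout : ℝ),
        (∀ l i m, 0 ≤ W l i m) ∧ (∀ i, 0 ≤ wout i) ∧
        ∀ x ∈ S,
          |f x -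
              ((∑ i, wout i *
                  sigmoidLayers dims W b L (fun i => x (Fin.cast hd i)) i) + bout)| < ε := by
  obtain ⟨G, hG, hGf⟩ : ∃ G, IsNonnegNet d d G ∧ ∀ x ∈ S, |f x - G x| < ε := by
    cases d with
    | zero =>
      -- on `Fin 0 → ℝ`, a single point, `f` itself is affine
      refine ⟨f, ⟨finZeroElim, f 0, finZeroElim, fun x => ?_⟩, fun _ _ => by simpa using hε⟩
      simp [Subsingleton.elim x 0]
    | succ e => exact exists_approx_of_monotoneOn hS hcont hmono hε
  obtain ⟨dims, hd, W, b, wout, bout, hW, hwout, hG⟩ := hG.exists_sigmoidLayers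
  exact ⟨dims, hd, d, le_rfl, W, b, wout, bout, hW, hwout, fun x hx => hG x ▸ hGf x hx⟩
end

section
/- There exist a continuous, coordinatewise non-decreasing function f: [0,1] → ℝ and ε > 0 such that for every convex function g: [0,1] → ℝ, sup_{x∈[0,1]} |f(x) − g(x)| ≥ ε. In particular, no family of convex functions (such as positive-weight networks with convex non-decreasing activations, which compute convex functions) can approximate every monotone function to arbitrary accuracy. -/
/-- There exist a continuous, non-decreasing `f : [0,1] → ℝ` and `ε > 0` such that every
convex `g : [0,1] → ℝ` deviates from `f` by at least `ε` somewhere on `[0,1]`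
(i.e. `sup_{x∈[0,1]} |f x − g x| ≥ ε`); hence no family of convex functions can
approximate every monotone function to arbitrary accuracy. -/
theorem exists_monotone_not_convex_approximable :
    ∃ (f : ℝ → ℝ) (ε : ℝ), 0 < ε ∧
      ContinuousOn f (Set.Icc (0 : ℝ) 1) ∧
      MonotoneOn f (Set.Icc (0 : ℝ) 1) ∧
      ∀ g : ℝ → ℝ, ConvexOn ℝ (Set.Icc (0 : ℝ) 1) g →
        ∃ x ∈ Set.Icc (0 : ℝ) 1, ε ≤ |f x - g x| := by
  refine ⟨fun x => min (2 * x) 1, 1/8, by norm_num, ?_, ?_, ?_⟩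
  · exact ((continuous_const.mul continuous_id).min continuous_const).continuousOn
  · intro a _ b _ hab
    exact min_le_min (by linarith) le_rfl
  · intro g hg
    by_contra h
    push_neg at h
    have h0 := h 0 (by norm_num)
    have hh := h (1/2) (by norm_num)
    have h1 := h 1 (by norm_num)
    have hc := hg.2 (Set.mem_Icc.mpr (by norm_num : (0:ℝ) ≤ 0 ∧ (0:ℝ) ≤ 1))
      (Set.mem_Icc.mpr (by norm_num : (0:ℝ) ≤ 1 ∧ (1:ℝ) ≤ 1))
      (by norm_num : (0:ℝ) ≤ 1/2) (by norm_num : (0:ℝ) ≤ 1/2) (by norm_num)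
    simp only [smul_eq_mul] at hc
    norm_num at hc h0 hh h1
    rw [abs_lt] at h0 hh h1
    linarith
end
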